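/- Let Φ ∈ H^∞(𝕋, B(E)) and α ∈ 𝔻. If the Poisson integral P[Φ](α) does not have dense range in E, then, with M := ker P[Φ](α)* (a nonzero closed subspace of E), the Blaschke-Potapov factor P := b_α P_M + (I_E − P_M) is a nontrivial left inner divisor of Φ. -/

import Mathlib

open MeasureTheory Complex

noncomputable section

/-- Normalized arc-length (Haar) measure on the unit circle `𝕋`, realized as a
measure on `ℂ` supported on the unit circle. -/
def mT : Measure ℂ :=
  Measure.map (fun t : ℝ => Complex.exp (t * Complex.I))
    ((ENNReal.ofReal (2 * Real.pi))⁻¹ • volume.restrict (Set.Ioc 0 (2 * Real.pi)))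

variable {D E E' : Type*}
  [NormedAddCommGroup D] [InnerProductSpace ℂ D] [CompleteSpace D]
  [NormedAddCommGroup E] [InnerProductSpace ℂ E] [CompleteSpace E]
  [NormedAddCommGroup E'] [InnerProductSpace ℂ E'] [CompleteSpace E']

/-- The `n`-th Fourier coefficient `Φ̂(n)x = ∫_𝕋 z̄ⁿ Φ(z)x dm(z)` of an
operator-valued function, applied to the vector `x`. -/
def fc (Φ : ℂ → D →L[ℂ] E) (n : ℤ) (x : D) : E :=
  ∫ z, ((starRingEnd ℂ) z) ^ n • (Φ z x) ∂mT

/-- Membership in `H^∞(𝕋, B(D,E))`: SOT-measurable, essentially bounded in operator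
norm, with vanishing negative Fourier coefficients. -/
structure MemHinf (Φ : ℂ → D →L[ℂ] E) : Prop where
  meas : ∀ x : D, AEStronglyMeasurable (fun z => Φ z x) mT
  bdd : ∃ r : ℝ, ∀ᵐ z ∂mT, ‖Φ z‖ ≤ r
  neg : ∀ n : ℤ, n < 0 → ∀ x : D, fc Φ n x = 0

/-- An inner function: `Φ ∈ H^∞` with `Φ(z)*Φ(z) = I` a.e. -/
def IsInnerFn (Φ : ℂ → D →L[ℂ] E) : Prop :=
  MemHinf Φ ∧ ∀ᵐ z ∂mT,
    (ContinuousLinearMap.adjoint (Φ z)).comp (Φ z) = ContinuousLinearMap.id ℂ D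

/-- A two-sided inner function: inner and `Φ(z)Φ(z)* = I` a.e. -/
def IsTwoSidedInner (Φ : ℂ → D →L[ℂ] E) : Prop :=
  IsInnerFn Φ ∧ ∀ᵐ z ∂mT,
    (Φ z).comp (ContinuousLinearMap.adjoint (Φ z)) = ContinuousLinearMap.id ℂ E

/-- `Θ` is a left inner divisor of `Φ`: `Θ` is inner and `Φ = Θ A` for some `A ∈ H^∞`. -/
def IsLeftInnerDiv (Θ : ℂ → E' →L[ℂ] E) (Φ : ℂ → D →L[ℂ] E) : Prop :=
  IsInnerFn Θ ∧ ∃ A : ℂ → D →L[ℂ] E', MemHinf A ∧ ∀ᵐ z ∂mT, Φ z = (Θ z).comp (A z)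

/-- `Ω` is a right inner divisor of `Φ`: `Ω` is inner and `Φ = B Ω` for some `B ∈ H^∞`. -/
def IsRightInnerDiv (Ω : ℂ → D →L[ℂ] E') (Φ : ℂ → D →L[ℂ] E) : Prop :=
  IsInnerFn Ω ∧ ∃ B : ℂ → E' →L[ℂ] E, MemHinf B ∧ ∀ᵐ z ∂mT, Φ z = (B z).comp (Ω z)

/-- `Δ` is an inner divisor of `Φ`: both a left and a right inner divisor. -/
def IsInnerDiv (Δ Φ : ℂ → E →L[ℂ] E) : Prop :=
  IsLeftInnerDiv Δ Φ ∧ IsRightInnerDiv Δ Φ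

/-- A unitary operator between Hilbert spaces. -/
def IsUnitaryOp (U : D →L[ℂ] E) : Prop :=
  (ContinuousLinearMap.adjoint U).comp U = ContinuousLinearMap.id ℂ D ∧
    U.comp (ContinuousLinearMap.adjoint U) = ContinuousLinearMap.id ℂ E

/-- An orthogonal projection: idempotent and self-adjoint. -/
def IsOrthoProj (P : E →L[ℂ] E) : Prop :=
  P.comp P = P ∧ ContinuousLinearMap.adjoint P = P

/-- A partial isometry: `T T* T = T`. -/
def IsPartialIsom (T : D →L[ℂ] E) : Prop :=
  (T.comp (ContinuousLinearMap.adjoint T)).comp T = T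

/-- The Blaschke factor `b_α(z) = (z - α)/(1 - ᾱ z)`. -/
def blaschke (α z : ℂ) : ℂ := (z - α) / (1 - (starRingEnd ℂ) α * z)

/-- The Poisson integral of `Φ ∈ H^∞` at `ζ ∈ 𝔻`, applied to the vector `x`:
`P[Φ](ζ)x = Σ_{n ≥ 0} Φ̂(n)x ζⁿ`. -/
def poissonFn (Φ : ℂ → D →L[ℂ] E) (ζ : ℂ) (x : D) : E :=
  ∑' n : ℕ, ζ ^ n • fc Φ (n : ℤ) x

/-- The `n`-th Fourier coefficient of a vector-valued function. -/
def vfc (f : ℂ → E) (n : ℤ) : E :=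
  ∫ z, ((starRingEnd ℂ) z) ^ n • f z ∂mT

/-- Membership in `H²(𝕋, E)`: square Bochner-integrable with vanishing
negative Fourier coefficients. -/
def MemH2 (f : ℂ → E) : Prop :=
  MemLp f 2 mT ∧ ∀ n : ℤ, n < 0 → vfc f n = 0

/-- A finite Blaschke product `θ = ∏ b_{αₙ}` with all `αₙ ∈ 𝔻`. -/
def IsFiniteBlaschkeProd (θ : ℂ → ℂ) : Prop :=
  ∃ (M : ℕ) (α : Fin M → ℂ), (∀ i, ‖α i‖ < 1) ∧ ∀ z, θ z = ∏ i, blaschke (α i) z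

/-- `Φ ∈ H^∞(𝕋, B(D,E))` is rational: `θ H²(𝕋,E) ⊆ ker H_{Φ*}` for some finite
Blaschke product `θ`, where `ker H_{Φ*} = {f ∈ H²(𝕋,E) : Φ*f ∈ H²(𝕋,D)}`. -/
def IsRationalFn (Φ : ℂ → D →L[ℂ] E) : Prop :=
  ∃ θ : ℂ → ℂ, IsFiniteBlaschkeProd θ ∧
    ∀ f : ℂ → E, MemH2 f →
      MemH2 (fun z => θ z • f z) ∧
      MemH2 (fun z => θ z • (ContinuousLinearMap.adjoint (Φ z)) (f z))

/-- A finite Blaschke-Potapov product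
`Δ = V ∏ₘ (b_{αₘ} Pₘ + (I - Pₘ))` with `V` a constant unitary, `αₘ ∈ 𝔻` and
`Pₘ` orthogonal projections. -/
def IsBPProduct (Δ : ℂ → E →L[ℂ] E) : Prop :=
  ∃ (M : ℕ) (V : E →L[ℂ] E) (α : Fin M → ℂ) (P : Fin M → E →L[ℂ] E),
    IsUnitaryOp V ∧ (∀ i, ‖α i‖ < 1) ∧ (∀ i, IsOrthoProj (P i)) ∧
    ∀ᵐ z ∂mT, Δ z = V * (List.ofFn fun i => blaschke (α i) z • P i + (1 - P i)).prod

/-- `Φ` and `Ψ` (with values in operators into the same space `E`) are left coprime: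
every common left inner divisor is a constant unitary. -/
def LeftCoprime {D₁ D₂ : Type*}
    [NormedAddCommGroup D₁] [InnerProductSpace ℂ D₁] [CompleteSpace D₁]
    [NormedAddCommGroup D₂] [InnerProductSpace ℂ D₂] [CompleteSpace D₂]
    (Φ : ℂ → D₁ →L[ℂ] E) (Ψ : ℂ → D₂ →L[ℂ] E) : Prop :=
  ∀ (F : Type) (_ : NormedAddCommGroup F) (_ : InnerProductSpace ℂ F) (_ : CompleteSpace F)
    (Θ : ℂ → F →L[ℂ] E), IsLeftInnerDiv Θ Φ → IsLeftInnerDiv Θ Ψ →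
      ∃ U : F →L[ℂ] E, IsUnitaryOp U ∧ ∀ᵐ z ∂mT, Θ z = U

end

/-!
Write `Θ = b_α P + (I - P)`. As `b_α` is unimodular on `𝕋` and `P` is an orthogonal projection,
`Θ(z)* = conj (b_α z) P + (I - P)` is the inverse of `Θ(z)`, so `Θ` is inner (it is in `H^∞` by
the mean value property, being holomorphic across the closed disc) and `Φ = Θ A` with `A = Θ* Φ`.
The point is that `A ∈ H^∞`, i.e. that `conj b_α · P Φ x` has no negative Fourier coefficients.
On `𝕋`, `conj (b_α z) = (z̄ - ᾱ) Σₖ αᵏ z̄ᵏ`, so these coefficients are combinations of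
`Σₖ αᵏ P Φ̂(k) x = P P[Φ](α) x`, which vanishes since `P` projects onto `(ran P[Φ](α))^⊥`.
That subspace is nonzero because `P[Φ](α)` is linear without dense range, and `Θ` is not
constant because `b_α` is injective on `𝕋`, whereas `z` is not `m`-a.e. constant (`∫ z dm = 0`).
-/

open Metric

lemma measurable_exp_mul_I : Measurable fun t : ℝ => Complex.exp (t * Complex.I) := by
  fun_prop

instance : IsProbabilityMeasure mT := by
  constructor
  rw [mT, Measure.map_apply measurable_exp_mul_I MeasurableSet.univ, Set.preimage_univ,
    Measure.smul_apply, Measure.restrict_apply MeasurableSet.univ, Set.univ_inter,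
    Real.volume_Ioc, sub_zero, smul_eq_mul]
  exact ENNReal.inv_mul_cancel (by simp [Real.pi_pos]) ENNReal.ofReal_ne_top

lemma ae_mT_norm_eq_one : ∀ᵐ z ∂mT, ‖z‖ = 1 := by
  rw [mT, ae_map_iff measurable_exp_mul_I.aemeasurable
    (measurableSet_eq_fun (by fun_prop) (by fun_prop))]
  exact .of_forall fun t => by simp [Complex.norm_exp_ofReal_mul_I]

lemma integral_mT_eq_circleAverage {F : Type*} [NormedAddCommGroup F] [NormedSpace ℂ F]
    {f : ℂ → F} (hf : AEStronglyMeasurable f mT) :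
    ∫ z, f z ∂mT = Real.circleAverage f 0 1 := by
  rw [mT, integral_map measurable_exp_mul_I.aemeasurable hf, integral_smul_measure,
    ENNReal.toReal_inv, ENNReal.toReal_ofReal Real.two_pi_pos.le, Real.circleAverage_def,
    intervalIntegral.integral_of_le Real.two_pi_pos.le]
  simp [circleMap]

lemma ContinuousOn.aestronglyMeasurable_mT {F : Type*} [TopologicalSpace F]
    [TopologicalSpace.PseudoMetrizableSpace F] {f : ℂ → F} (hf : ContinuousOn f (closedBall 0 1)) :
    AEStronglyMeasurable f mT := by
  rw [← Measure.restrict_eq_self_of_ae_mem (s := closedBall 0 1)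
    (ae_mT_norm_eq_one.mono fun z hz => by simp [hz])]
  exact hf.aestronglyMeasurable measurableSet_closedBall

lemma DiffContOnCl.integral_mT {F : Type*} [NormedAddCommGroup F] [NormedSpace ℂ F]
    [CompleteSpace F] {f : ℂ → F} (hf : DiffContOnCl ℂ f (ball 0 1)) :
    ∫ z, f z ∂mT = f 0 := by
  have hcont : ContinuousOn f (closedBall 0 1) := by
    simpa [closure_ball] using hf.continuousOn
  rw [integral_mT_eq_circleAverage hcont.aestronglyMeasurable_mT]
  exact DiffContOnCl.circleAverage (by simpa using hf)

section

variable {D E : Type*} [NormedAddCommGroup D] [InnerProductSpace ℂ D]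
  [NormedAddCommGroup E] [InnerProductSpace ℂ E]

lemma ae_mT_conj_zpow_eq_zpow_neg (n : ℤ) : ∀ᵐ z ∂mT, starRingEnd ℂ z ^ n = z ^ (-n) := by
  filter_upwards [ae_mT_norm_eq_one] with z hz
  rw [← Complex.inv_eq_conj hz, inv_zpow, zpow_neg]

lemma DiffContOnCl.vfc_eq_zero [CompleteSpace E] {f : ℂ → E} (hf : DiffContOnCl ℂ f (ball 0 1))
    {n : ℤ} (hn : n < 0) : vfc f n = 0 := by
  obtain ⟨m, rfl⟩ : ∃ m : ℕ, n = -(m + 1 : ℕ) := ⟨(-n - 1).toNat, by omega⟩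
  calc vfc f _ = ∫ z, z ^ (m + 1) • f z ∂mT := by
        refine integral_congr_ae ?_
        filter_upwards [ae_mT_conj_zpow_eq_zpow_neg (-(m + 1 : ℕ))] with z hz
        rw [hz, neg_neg, zpow_natCast]
    _ = 0 := by
        rw [((differentiable_pow _).diffContOnCl.smul hf).integral_mT]
        simp

lemma MeasureTheory.Integrable.conj_zpow_smul {F : Type*} [NormedAddCommGroup F]
    [NormedSpace ℂ F] {f : ℂ → F} (hf : Integrable f mT) (n : ℤ) :
    Integrable (fun z => starRingEnd ℂ z ^ n • f z) mT :=
  hf.bdd_smul 1 (by fun_prop : Measurable fun z : ℂ => starRingEnd ℂ z ^ n).aestronglyMeasurable <|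
    ae_mT_norm_eq_one.mono fun z hz => by simp [hz]

lemma vfc_add {f g : ℂ → E} (hf : Integrable f mT) (hg : Integrable g mT) (n : ℤ) :
    vfc (fun z => f z + g z) n = vfc f n + vfc g n := by
  simp only [vfc, smul_add]
  exact integral_add (hf.conj_zpow_smul n) (hg.conj_zpow_smul n)

lemma ContinuousLinearMap.vfc_comp [CompleteSpace D] [CompleteSpace E] (T : D →L[ℂ] E)
    {f : ℂ → D} (hf : Integrable f mT) (n : ℤ) :
    vfc (fun z => T (f z)) n = T (vfc f n) := by
  simp only [vfc, ← T.map_smul]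
  exact T.integral_comp_comm (hf.conj_zpow_smul n)

lemma fc_eq_vfc (Φ : ℂ → D →L[ℂ] E) (n : ℤ) (x : D) : fc Φ n x = vfc (fun z => Φ z x) n :=
  rfl

lemma fc_smul (Φ : ℂ → D →L[ℂ] E) (n : ℤ) (c : ℂ) (x : D) : fc Φ n (c • x) = c • fc Φ n x := by
  simp only [fc, map_smul, smul_comm _ c, integral_smul]

namespace MemHinf

variable {Φ : ℂ → D →L[ℂ] E}

lemma integrable_apply (hΦ : MemHinf Φ) (x : D) : Integrable (fun z => Φ z x) mT := by
  obtain ⟨r, hr⟩ := hΦ.bdd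
  exact .of_bound (hΦ.meas x) (r * ‖x‖) (hr.mono fun z hz => (Φ z).le_of_opNorm_le hz x)

lemma fc_add (hΦ : MemHinf Φ) (n : ℤ) (x y : D) : fc Φ n (x + y) = fc Φ n x + fc Φ n y := by
  simp only [fc, map_add]
  exact vfc_add (hΦ.integrable_apply x) (hΦ.integrable_apply y) n

lemma exists_norm_fc_le (hΦ : MemHinf Φ) : ∃ r, ∀ n x, ‖fc Φ n x‖ ≤ r * ‖x‖ := by
  obtain ⟨r, hr⟩ := hΦ.bdd
  refine ⟨r, fun n x => ?_⟩
  rw [fc]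
  simpa using norm_integral_le_of_norm_le_const (μ := mT) <|
    (hr.and ae_mT_norm_eq_one).mono fun z hz => by
      simpa [norm_smul, hz.2] using (Φ z).le_of_opNorm_le hz.1 x

lemma hasSum_poissonFn [CompleteSpace E] (hΦ : MemHinf Φ) {α : ℂ} (hα : ‖α‖ < 1) (x : D) :
    HasSum (fun n : ℕ => α ^ n • fc Φ n x) (poissonFn Φ α x) := by
  obtain ⟨r, hr⟩ := hΦ.exists_norm_fc_le
  refine (Summable.of_norm_bounded
    ((summable_geometric_of_lt_one (norm_nonneg α) hα).mul_right (r * ‖x‖)) fun n => ?_).hasSum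
  rw [norm_smul, norm_pow]
  exact mul_le_mul_of_nonneg_left (hr n x) (by positivity)

lemma isLinearMap_poissonFn [CompleteSpace E] (hΦ : MemHinf Φ) {α : ℂ} (hα : ‖α‖ < 1) :
    IsLinearMap ℂ (poissonFn Φ α) where
  map_add x y := by
    refine ((hΦ.hasSum_poissonFn hα x).add (hΦ.hasSum_poissonFn hα y)).unique ?_ |>.symm
    simpa only [hΦ.fc_add, smul_add] using hΦ.hasSum_poissonFn hα (x + y)
  map_smul c x := by
    refine ((hΦ.hasSum_poissonFn hα x).const_smul c).unique ?_ |>.symm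
    simpa only [fc_smul, smul_comm c] using hΦ.hasSum_poissonFn hα (c • x)

end MemHinf

lemma IsLinearMap.denseRange_of_forall_inner_eq_zero [CompleteSpace E] {f : D → E}
    (hf : IsLinearMap ℂ f) (h : ∀ x, (∀ y, inner ℂ (f y) x = 0) → x = 0) : DenseRange f := by
  let K := LinearMap.range (IsLinearMap.mk' f hf)
  have hK : Kᗮ = ⊥ := (Submodule.eq_bot_iff _).mpr fun x hx => h x fun y => hx _ ⟨y, rfl⟩
  exact Submodule.dense_iff_topologicalClosure_eq_top.mpr
    (Submodule.topologicalClosure_eq_top_iff.mpr hK)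

lemma hasSum_vfc_inv_one_sub_mul_conj_smul [CompleteSpace E] {f : ℂ → E} (hf : Integrable f mT)
    {a : ℂ} (ha : ‖a‖ < 1) (n : ℤ) :
    HasSum (fun k : ℕ => a ^ k • vfc f (n + k))
      (vfc (fun z => (1 - a * starRingEnd ℂ z)⁻¹ • f z) n) := by
  have hlim : ∀ᵐ z ∂mT, HasSum (fun k : ℕ => a ^ k • starRingEnd ℂ z ^ (n + k) • f z)
      (starRingEnd ℂ z ^ n • (1 - a * starRingEnd ℂ z)⁻¹ • f z) := by
    filter_upwards [ae_mT_norm_eq_one] with z hz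
    have hz0 : starRingEnd ℂ z ≠ 0 := by simp [← norm_ne_zero_iff, hz]
    rw [smul_comm]
    have hq : ‖a * starRingEnd ℂ z‖ < 1 := by simpa [hz]
    convert (hasSum_geometric_of_norm_lt_one hq).smul_const (starRingEnd ℂ z ^ n • f z)
      using 2 with k
    rw [smul_smul, smul_smul, mul_pow, zpow_add₀ hz0, zpow_natCast]
    ring_nf
  have hsum := hasSum_integral_of_dominated_convergence
    (F := fun (k : ℕ) z => a ^ k • starRingEnd ℂ z ^ (n + k) • f z)
    (fun (k : ℕ) z => ‖a‖ ^ k * ‖f z‖)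
    (fun k => (hf.conj_zpow_smul _).aestronglyMeasurable.const_smul (a ^ k))
    (fun k => ae_mT_norm_eq_one.mono fun z hz => by simp [norm_smul, hz])
    (.of_forall fun z => (summable_geometric_of_lt_one (norm_nonneg a) ha).mul_right _)
    (by simpa only [tsum_mul_right] using hf.norm.const_mul _) hlim
  simp only [vfc]
  simpa only [integral_smul] using hsum

lemma vfc_inv_one_sub_mul_conj_smul_eq_zero [CompleteSpace E] {g : ℂ → E}
    (hg : Integrable g mT) (hneg : ∀ m < 0, vfc g m = 0) {a : ℂ} (ha : ‖a‖ < 1)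
    (hsum : HasSum (fun i : ℕ => a ^ i • vfc g i) 0) {n : ℤ} (hn : n ≤ 0) :
    vfc (fun z => (1 - a * starRingEnd ℂ z)⁻¹ • g z) n = 0 := by
  obtain ⟨j, rfl⟩ : ∃ j : ℕ, n = -j := ⟨(-n).toNat, by omega⟩
  -- `Σₖ aᵏ ĝ(k - j) = aʲ Σᵢ aⁱ ĝ(i)`, as `ĝ` vanishes at negative indices
  refine (hasSum_vfc_inv_one_sub_mul_conj_smul hg ha _).unique ?_
  rw [← hasSum_nat_add_iff' j, Finset.sum_eq_zero fun k hk => ?_, sub_zero]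
  · convert hsum.const_smul (a ^ j) using 2 with i
    · rw [smul_smul, ← pow_add]
      push_cast
      ring_nf
    · simp
  · rw [hneg _ (by simp at hk; omega), smul_zero]

lemma one_sub_conj_mul_ne_zero {α z : ℂ} (hα : ‖α‖ < 1) (hz : ‖z‖ ≤ 1) :
    1 - starRingEnd ℂ α * z ≠ 0 := by
  refine sub_ne_zero.mpr fun h => ?_
  have : ‖starRingEnd ℂ α * z‖ < 1 := by
    rw [norm_mul, RCLike.norm_conj]
    nlinarith [norm_nonneg α, norm_nonneg z]
  simp [← h] at this

lemma norm_blaschke_eq_one {α z : ℂ} (hα : ‖α‖ < 1) (hz : ‖z‖ = 1) : ‖blaschke α z‖ = 1 := by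
  have hzz : z * starRingEnd ℂ z = 1 := by simp [Complex.mul_conj', hz]
  have hnum : z - α = z * starRingEnd ℂ (1 - starRingEnd ℂ α * z) := by
    simp only [map_sub, map_mul, map_one, Complex.conj_conj]
    linear_combination α * hzz
  rw [blaschke, norm_div, hnum, norm_mul, RCLike.norm_conj, hz, one_mul,
    div_self (norm_ne_zero_iff.mpr (one_sub_conj_mul_ne_zero hα hz.le))]

lemma conj_blaschke (α z : ℂ) :
    starRingEnd ℂ (blaschke α z) =
      (starRingEnd ℂ z - starRingEnd ℂ α) * (1 - α * starRingEnd ℂ z)⁻¹ := by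
  simp [blaschke, div_eq_mul_inv]

lemma differentiableOn_blaschke {α : ℂ} (hα : ‖α‖ < 1) :
    DifferentiableOn ℂ (blaschke α) (closedBall 0 1) := fun z hz =>
  ((differentiableAt_id.sub_const α).div
    ((differentiableAt_const _).sub (differentiableAt_id.const_mul _))
    (one_sub_conj_mul_ne_zero hα (by simpa using hz))).differentiableWithinAt

lemma blaschke_injOn {α : ℂ} (hα : ‖α‖ < 1) : Set.InjOn (blaschke α) (closedBall 0 1) := by
  intro z hz w hw h
  have hz' : ‖z‖ ≤ 1 := by simpa using hz
  have hw' : ‖w‖ ≤ 1 := by simpa using hw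
  rw [blaschke, blaschke, div_eq_div_iff (one_sub_conj_mul_ne_zero hα hz')
    (one_sub_conj_mul_ne_zero hα hw')] at h
  have hαα : 1 - α * starRingEnd ℂ α ≠ 0 := by
    rw [Complex.mul_conj', sub_ne_zero]
    intro h1
    have := congrArg Complex.re h1
    norm_cast at this
    nlinarith [norm_nonneg α]
  exact sub_eq_zero.mp <|
    (mul_eq_zero.mp (by linear_combination h : (z - w) * _ = 0)).resolve_right hαα

lemma vfc_conj_blaschke_smul_eq_zero [CompleteSpace E] {g : ℂ → E} (hg : Integrable g mT)
    (hneg : ∀ m < 0, vfc g m = 0) {α : ℂ} (hα : ‖α‖ < 1)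
    (hsum : HasSum (fun i : ℕ => α ^ i • vfc g i) 0) {n : ℤ} (hn : n < 0) :
    vfc (fun z => starRingEnd ℂ (blaschke α z) • g z) n = 0 := by
  set h := fun z => (1 - α * starRingEnd ℂ z)⁻¹ • g z
  have hh : Integrable h mT := by
    refine hg.bdd_smul (1 - ‖α‖)⁻¹ (by fun_prop : Measurable _).aestronglyMeasurable
      (ae_mT_norm_eq_one.mono fun z hz => ?_)
    have : 1 - ‖α‖ ≤ ‖1 - α * starRingEnd ℂ z‖ := by
      simpa [hz] using norm_sub_norm_le (1 : ℂ) (α * starRingEnd ℂ z)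
    rw [norm_inv]
    exact inv_anti₀ (by linarith) this
  have hsplit : ∀ᵐ z ∂mT, starRingEnd ℂ z ^ n • starRingEnd ℂ (blaschke α z) • g z =
      starRingEnd ℂ z ^ (n + 1) • h z - starRingEnd ℂ α • starRingEnd ℂ z ^ n • h z := by
    filter_upwards [ae_mT_norm_eq_one] with z hz
    have hz0 : starRingEnd ℂ z ≠ 0 := by simp [← norm_ne_zero_iff, hz]
    simp only [h, conj_blaschke, smul_smul, ← sub_smul, zpow_add_one₀ hz0]
    ring_nf
  calc vfc _ n = vfc h (n + 1) - starRingEnd ℂ α • vfc h n := by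
        rw [vfc, integral_congr_ae hsplit, integral_sub (hh.conj_zpow_smul _)
          (g := fun z => starRingEnd ℂ α • starRingEnd ℂ z ^ n • h z)
          ((hh.conj_zpow_smul n).smul (starRingEnd ℂ α)), integral_smul]
        rfl
    _ = 0 := by
        rw [vfc_inv_one_sub_mul_conj_smul_eq_zero hg hneg hα hsum (by omega),
          vfc_inv_one_sub_mul_conj_smul_eq_zero hg hneg hα hsum hn.le, smul_zero, sub_zero]

def bpFactor (c : ℂ) (P : E →L[ℂ] E) : E →L[ℂ] E := c • P + (1 - P)

lemma bpFactor_apply (c : ℂ) (P : E →L[ℂ] E) (x : E) : bpFactor c P x = c • P x + (1 - P) x :=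
  rfl

lemma bpFactor_apply_of_apply_eq {P : E →L[ℂ] E} {x : E} (hx : P x = x) (c : ℂ) :
    bpFactor c P x = c • x := by
  simp [bpFactor_apply, hx]

lemma norm_bpFactor_le (c : ℂ) (P : E →L[ℂ] E) : ‖bpFactor c P‖ ≤ ‖c‖ * ‖P‖ + ‖1 - P‖ :=
  (norm_add_le _ _).trans_eq (by rw [norm_smul])

lemma bpFactor_comp_bpFactor {P : E →L[ℂ] E} (hP : P ∘L P = P) (c d : ℂ) :
    bpFactor d P ∘L bpFactor c P = bpFactor (d * c) P := by
  ext x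
  have hPx : P (P x) = P x := DFunLike.congr_fun hP x
  simp only [ContinuousLinearMap.comp_apply, bpFactor_apply, sub_apply, one_apply_eq_self,
    map_add, map_sub, map_smul, hPx]
  module

lemma bpFactor_comp_bpFactor_conj {P : E →L[ℂ] E} (hP : P ∘L P = P) {c : ℂ} (hc : ‖c‖ = 1) :
    bpFactor c P ∘L bpFactor (starRingEnd ℂ c) P = 1 := by
  rw [bpFactor_comp_bpFactor hP, Complex.mul_conj', hc]
  simp [bpFactor]

lemma bpFactor_conj_comp_bpFactor {P : E →L[ℂ] E} (hP : P ∘L P = P) {c : ℂ} (hc : ‖c‖ = 1) :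
    bpFactor (starRingEnd ℂ c) P ∘L bpFactor c P = 1 := by
  simpa using bpFactor_comp_bpFactor_conj hP (c := starRingEnd ℂ c) (by simpa using hc)

lemma adjoint_bpFactor [CompleteSpace E] {P : E →L[ℂ] E} (hP : ContinuousLinearMap.adjoint P = P)
    (c : ℂ) : ContinuousLinearMap.adjoint (bpFactor c P) = bpFactor (starRingEnd ℂ c) P := by
  rw [← ContinuousLinearMap.star_eq_adjoint] at hP ⊢
  simp [bpFactor, star_sub, hP]

lemma DiffContOnCl.memHinf [CompleteSpace E] {Φ : ℂ → D →L[ℂ] E}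
    (hΦ : DiffContOnCl ℂ Φ (ball 0 1)) : MemHinf Φ := by
  have hcont : ContinuousOn Φ (closedBall 0 1) := by simpa [closure_ball] using hΦ.continuousOn
  obtain ⟨C, hC⟩ := (isCompact_closedBall 0 1).exists_bound_of_continuousOn hcont
  refine ⟨fun x => (hcont.clm_apply continuousOn_const).aestronglyMeasurable_mT,
    ⟨C, ae_mT_norm_eq_one.mono fun z hz => hC z (by simp [hz])⟩,
    fun n hn x => DiffContOnCl.vfc_eq_zero ?_ hn⟩
  exact ⟨hΦ.1.clm_apply (differentiableOn_const x), hΦ.2.clm_apply continuousOn_const⟩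

lemma isInnerFn_bpFactor_blaschke [CompleteSpace E] {α : ℂ} (hα : ‖α‖ < 1) {P : E →L[ℂ] E}
    (hP : IsOrthoProj P) : IsInnerFn fun z => bpFactor (blaschke α z) P := by
  refine ⟨DiffContOnCl.memHinf ?_, ae_mT_norm_eq_one.mono fun z hz => ?_⟩
  · exact (((differentiableOn_blaschke hα).smul_const P).add_const (1 - P)).diffContOnCl_ball
      subset_rfl
  · rw [adjoint_bpFactor hP.2, bpFactor_conj_comp_bpFactor hP.1 (norm_blaschke_eq_one hα hz)]
    rfl

lemma MemHinf.bpFactor_conj_blaschke_comp [CompleteSpace E] {Φ : ℂ → D →L[ℂ] E}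
    (hΦ : MemHinf Φ) {α : ℂ} (hα : ‖α‖ < 1) {P : E →L[ℂ] E}
    (hP : ∀ y, P (poissonFn Φ α y) = 0) :
    MemHinf fun z => bpFactor (starRingEnd ℂ (blaschke α z)) P ∘L Φ z := by
  have hb : ContinuousOn (fun z => starRingEnd ℂ (blaschke α z)) (closedBall 0 1) :=
    Complex.continuous_conj.comp_continuousOn (differentiableOn_blaschke hα).continuousOn
  have hb_norm : ∀ᵐ z ∂mT, ‖starRingEnd ℂ (blaschke α z)‖ = 1 :=
    ae_mT_norm_eq_one.mono fun z hz => by rw [RCLike.norm_conj, norm_blaschke_eq_one hα hz]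
  obtain ⟨r, hr⟩ := hΦ.bdd
  refine ⟨fun x => ?_, ⟨(‖P‖ + ‖1 - P‖) * r, ?_⟩, fun n hn x => ?_⟩
  · simp only [ContinuousLinearMap.comp_apply, bpFactor_apply]
    exact (hb.aestronglyMeasurable_mT.smul
      (P.continuous.comp_aestronglyMeasurable (hΦ.meas x))).add
        ((1 - P).continuous.comp_aestronglyMeasurable (hΦ.meas x))
  · filter_upwards [hr, hb_norm] with z hz hbz
    refine (ContinuousLinearMap.opNorm_comp_le _ _).trans
      (mul_le_mul ?_ hz (norm_nonneg _) (by positivity))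
    rw [← one_mul ‖P‖, ← hbz]
    exact norm_bpFactor_le _ P
  · have hΦx := hΦ.integrable_apply x
    have hPneg : ∀ m < 0, vfc (fun z => P (Φ z x)) m = 0 := fun m hm => by
      rw [P.vfc_comp hΦx, ← fc_eq_vfc, hΦ.neg m hm x, map_zero]
    have hPsum : HasSum (fun i : ℕ => α ^ i • vfc (fun z => P (Φ z x)) i) 0 := by
      simpa only [map_smul, hP, P.vfc_comp hΦx, fc_eq_vfc] using
        (hΦ.hasSum_poissonFn hα x).mapL P
    have hPΦx := P.integrable_comp hΦx
    show vfc (fun z => starRingEnd ℂ (blaschke α z) • P (Φ z x) + (1 - P) (Φ z x)) n = 0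
    rw [vfc_add (f := fun z => starRingEnd ℂ (blaschke α z) • P (Φ z x))
      (hPΦx.bdd_smul 1 hb.aestronglyMeasurable_mT (hb_norm.mono fun z hz => hz.le))
      ((1 - P).integrable_comp hΦx), vfc_conj_blaschke_smul_eq_zero hPΦx hPneg hα hPsum hn,
      (1 - P).vfc_comp hΦx, ← fc_eq_vfc, hΦ.neg n hn x, map_zero, zero_add]

lemma MemHinf.isLeftInnerDiv_bpFactor_blaschke [CompleteSpace E] {Φ : ℂ → D →L[ℂ] E}
    (hΦ : MemHinf Φ) {α : ℂ} (hα : ‖α‖ < 1) {P : E →L[ℂ] E} (hP : IsOrthoProj P)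
    (hPΦ : ∀ y, P (poissonFn Φ α y) = 0) :
    IsLeftInnerDiv (fun z => bpFactor (blaschke α z) P) Φ := by
  refine ⟨isInnerFn_bpFactor_blaschke hα hP, _, hΦ.bpFactor_conj_blaschke_comp hα hPΦ, ?_⟩
  filter_upwards [ae_mT_norm_eq_one] with z hz
  rw [← ContinuousLinearMap.comp_assoc,
    bpFactor_comp_bpFactor_conj hP.1 (norm_blaschke_eq_one hα hz)]
  rfl

lemma not_ae_mT_eq_const (c : ℂ) : ¬ ∀ᵐ z ∂mT, z = c := by
  intro h
  have hmean : ∫ z, z ∂mT = 0 := differentiable_id.diffContOnCl.integral_mT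
  rw [integral_congr_ae h] at hmean
  obtain ⟨z, hzc, hz⟩ := (h.and ae_mT_norm_eq_one).exists
  simp_all

lemma not_ae_bpFactor_blaschke_eq {α : ℂ} (hα : ‖α‖ < 1) {P : E →L[ℂ] E} {x : E} (hx : P x = x)
    (hx0 : x ≠ 0) (U : E →L[ℂ] E) : ¬ ∀ᵐ z ∂mT, bpFactor (blaschke α z) P = U := by
  intro h
  obtain ⟨z₀, hz₀, hz₀U⟩ := (ae_mT_norm_eq_one.and h).exists
  refine not_ae_mT_eq_const z₀ ?_
  filter_upwards [ae_mT_norm_eq_one, h] with z hz hzU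
  have : blaschke α z • x = blaschke α z₀ • x := by
    rw [← bpFactor_apply_of_apply_eq hx, ← bpFactor_apply_of_apply_eq hx, hzU, hz₀U]
  exact blaschke_injOn hα (by simp [hz]) (by simp [hz₀]) (smul_left_injective ℂ hx0 this)

end

variable {D E E' : Type*}
  [NormedAddCommGroup D] [InnerProductSpace ℂ D] [CompleteSpace D]
  [NormedAddCommGroup E] [InnerProductSpace ℂ E] [CompleteSpace E]
  [NormedAddCommGroup E'] [InnerProductSpace ℂ E'] [CompleteSpace E']

/-- Let `Φ ∈ H^∞(𝕋, B(E))` and `α ∈ 𝔻`. If the Poisson integral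
`P[Φ](α)` does not have dense range, then, with `M := ker P[Φ](α)* = (ran P[Φ](α))^⊥`
(a nonzero closed subspace) and `P_M` the orthogonal projection onto `M`, the
Blaschke-Potapov factor `b_α P_M + (I - P_M)` is a nontrivial left inner divisor of `Φ`. -/
theorem BPFactor_is_nontrivial_leftInnerDivisor (Φ : ℂ → E →L[ℂ] E) (hΦ : MemHinf Φ)
    (α : ℂ) (hα : ‖α‖ < 1) (hnd : ¬ DenseRange (poissonFn Φ α))
    (P : E →L[ℂ] E) (hP : IsOrthoProj P)
    (hPrange : (LinearMap.range (P : E →ₗ[ℂ] E) : Set E) =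
      {x : E | ∀ y : E, (inner ℂ (poissonFn Φ α y) x : ℂ) = 0}) :
    (LinearMap.range (P : E →ₗ[ℂ] E) ≠ ⊥) ∧
    IsLeftInnerDiv (fun z => blaschke α z • P + (1 - P)) Φ ∧
    ¬ ∃ U : E →L[ℂ] E, IsUnitaryOp U ∧ ∀ᵐ z ∂mT, blaschke α z • P + (1 - P) = U := by
  have hPpois : ∀ y, P (poissonFn Φ α y) = 0 := fun y => ext_inner_right ℂ fun u => by
    have hu : P u ∈ (LinearMap.range (P : E →ₗ[ℂ] E) : Set E) := ⟨u, rfl⟩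
    rw [hPrange] at hu
    rw [inner_zero_left, ← hP.2, ContinuousLinearMap.adjoint_inner_left, hu y]
  have hne : LinearMap.range (P : E →ₗ[ℂ] E) ≠ ⊥ := fun hbot => hnd <|
    (hΦ.isLinearMap_poissonFn hα).denseRange_of_forall_inner_eq_zero fun x hx => by
      have hx' : x ∈ (LinearMap.range (P : E →ₗ[ℂ] E) : Set E) := hPrange ▸ hx
      simpa [hbot] using hx'
  obtain ⟨_, ⟨v, rfl⟩, hv⟩ := (Submodule.ne_bot_iff _).mp hne
  exact ⟨hne, hΦ.isLeftInnerDiv_bpFactor_blaschke hα hP hPpois,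
    fun ⟨U, _, hU⟩ => not_ae_bpFactor_blaschke_eq hα (DFunLike.congr_fun hP.1 v) hv U hU⟩
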